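/- arXiv:1207.6687 — 4 statements merged into one kernel-verified Lean document; each statement's English description precedes it below -/
import Mathlib

section
/- Let ω₀ be a normalized ℝ-valued 2-cocycle on a group Γ, and for n ≥ 1 define ω₀^{(n)}(g₀,…,gₙ) = Σ_{j=1}^{n} ω₀(g₀ g₁ ⋯ g_{j−1}, g_j). If g₀ g₁ ⋯ gₙ = e, then ω₀^{(n)}(g₀, g₁, …, gₙ) = ω₀^{(n)}(gₙ, g₀, g₁, …, g_{n−1}); that is, ω₀^{(n)} is invariant under cyclic permutation of its arguments on tuples whose product is the identity. -/
/-- `ω₀^{(n)}(g₀,…,gₙ) = Σ_{j=1}^n ω₀(g₀ g₁ ⋯ g_{j-1}, g_j)`. -/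
def omegaN {Γ : Type} [Group Γ] (ω₀ : Γ → Γ → ℝ) (n : ℕ) (g : Fin (n + 1) → Γ) : ℝ :=
  ∑ j ∈ Finset.Icc 1 n,
    ω₀ (((List.ofFn g).take j).prod) (g ⟨j % (n + 1), Nat.mod_lt j (Nat.succ_pos n)⟩)

/-- The basic take-product recursion for `List.ofFn`. -/
lemma prod_take_ofFn_succ {Γ : Type} [Group Γ] {n : ℕ} (g : Fin (n+1) → Γ) (k : ℕ)
    (h : k < n+1) :
    ((List.ofFn g).take (k+1)).prod = ((List.ofFn g).take k).prod * g ⟨k, h⟩ := by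
  have hk : k < (List.ofFn g).length := by simp; omega
  rw [List.prod_take_succ _ k hk]
  congr 1
  rw [List.getElem_ofFn]

lemma omega_inv_left {Γ : Type} [Group Γ] (ω₀ : Γ → Γ → ℝ)
    (hcoc : ∀ g h k : Γ, ω₀ g h + ω₀ (g * h) k = ω₀ g (h * k) + ω₀ h k)
    (hnorm₁ : ∀ g : Γ, ω₀ g 1 = 0) (hnorm₂ : ∀ g : Γ, ω₀ 1 g = 0)
    (hnorm₃ : ∀ g : Γ, ω₀ g g⁻¹ = 0) (g : Γ) : ω₀ g⁻¹ g = 0 := by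
  have h := hcoc g g⁻¹ g
  simp only [mul_inv_cancel, inv_mul_cancel, hnorm₁, hnorm₂, hnorm₃] at h
  linarith

/-- if `g₀ g₁ ⋯ gₙ = e` then `ω₀^{(n)}` is invariant under the cyclic
permutation `(g₀,…,gₙ) ↦ (gₙ, g₀, …, g_{n-1})`. -/
theorem stmt_2 (Γ : Type) [Group Γ] (ω₀ : Γ → Γ → ℝ)
    (hcoc : ∀ g h k : Γ, ω₀ g h + ω₀ (g * h) k = ω₀ g (h * k) + ω₀ h k)
    (hnorm₁ : ∀ g : Γ, ω₀ g 1 = 0) (hnorm₂ : ∀ g : Γ, ω₀ 1 g = 0)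
    (hnorm₃ : ∀ g : Γ, ω₀ g g⁻¹ = 0)
    (n : ℕ) (hn : 1 ≤ n) (g : Fin (n + 1) → Γ)
    (hprod : (List.ofFn g).prod = 1) :
    omegaN ω₀ n g =
      omegaN ω₀ n (fun i => g ⟨(i.val + n) % (n + 1), Nat.mod_lt _ (Nat.succ_pos n)⟩) := by
  classical
  set g' : Fin (n + 1) → Γ :=
    (fun i => g ⟨(i.val + n) % (n + 1), Nat.mod_lt _ (Nat.succ_pos n)⟩) with hg'
  set gN : Γ := g ⟨n, Nat.lt_succ_self n⟩ with hgN
  set P : ℕ → Γ := fun j => ((List.ofFn g).take j).prod with hPdef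
  set P' : ℕ → Γ := fun j => ((List.ofFn g').take j).prod with hP'def
  have gcast : ∀ (a b : ℕ) (h : a < n+1) (h' : b < n+1), a = b → g ⟨a, h⟩ = g ⟨b, h'⟩ := by
    intro a b h h' e; subst e; rfl
  have hP0 : P 0 = 1 := by simp [hPdef]
  have hPsucc : ∀ k, (h : k < n + 1) → P (k+1) = P k * g ⟨k, by omega⟩ := by
    intro k h
    simpa [hPdef] using prod_take_ofFn_succ g k h
  have hP'succ : ∀ k, (h : k < n + 1) → P' (k+1) = P' k * g' ⟨k, by omega⟩ := by
    intro k h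
    simpa [hP'def] using prod_take_ofFn_succ g' k h
  -- top product is 1
  have hPtop : P (n+1) = 1 := by
    have h : ((List.ofFn g).take (n+1)) = List.ofFn g := by
      apply List.take_of_length_le; simp
    show ((List.ofFn g).take (n+1)).prod = 1
    rw [h, hprod]
  have hPn : P n * gN = 1 := by
    have h : P (n+1) = P n * gN := hPsucc n (by omega)
    rw [← h]; exact hPtop
  have hPninv : P n = gN⁻¹ := by rw [eq_inv_iff_mul_eq_one]; exact hPn
  -- values of g'
  have hg'0 : ∀ (h : (0:ℕ) < n + 1), g' ⟨0, h⟩ = gN := by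
    intro h
    show g ⟨(0 + n) % (n+1), _⟩ = g ⟨n, _⟩
    exact gcast _ _ _ _ (by simp [Nat.mod_eq_of_lt (by omega : n < n + 1)])
  have hg'k : ∀ k, 1 ≤ k → ∀ (h : k < n + 1), g' ⟨k, h⟩ = g ⟨k - 1, by omega⟩ := by
    intro k hk h
    show g ⟨(k + n) % (n+1), _⟩ = g ⟨k - 1, _⟩
    apply gcast
    have he : k + n = (k - 1) + 1 * (n + 1) := by omega
    rw [he, Nat.add_mul_mod_self_right, Nat.mod_eq_of_lt (by omega)]
  -- shifted partial products
  have hP'1 : ∀ j, 1 ≤ j → j ≤ n → P' j = gN * P (j - 1) := by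
    intro j
    induction j with
    | zero => omega
    | succ k ih =>
      intro _ hk
      rcases Nat.eq_zero_or_pos k with h0 | h1
      · subst h0
        rw [hP'succ 0 (by omega), hg'0]
        simp [hP'def, hP0]
      · rw [hP'succ k (by omega), ih h1 (by omega), hg'k k h1 (by omega), mul_assoc]
        congr 1
        have h := hPsucc (k-1) (by omega)
        rw [show k - 1 + 1 = k by omega] at h
        rw [show k + 1 - 1 = k by omega, ← h]
  -- the two elementary summands
  set t : ℕ → ℝ := fun k => ω₀ (P k) (g ⟨k % (n + 1), Nat.mod_lt _ (Nat.succ_pos n)⟩) with ht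
  set s : ℕ → ℝ := fun k => ω₀ (gN * P k) (g ⟨k % (n + 1), Nat.mod_lt _ (Nat.succ_pos n)⟩)
    with hs
  have hLHS : omegaN ω₀ n g = ∑ j ∈ Finset.Icc 1 n, t j := rfl
  have hRHS : omegaN ω₀ n g' = ∑ j ∈ Finset.Icc 1 n, s (j - 1) := by
    unfold omegaN
    apply Finset.sum_congr rfl
    intro j hj
    simp only [Finset.mem_Icc] at hj
    have h1 : ((List.ofFn g').take j).prod = gN * P (j - 1) := hP'1 j hj.1 hj.2
    have hjm : j % (n+1) = j := Nat.mod_eq_of_lt (by omega)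
    have h2 : g' ⟨j % (n + 1), Nat.mod_lt j (Nat.succ_pos n)⟩
        = g ⟨(j-1) % (n + 1), Nat.mod_lt (j-1) (Nat.succ_pos n)⟩ := by
      simp only [hg']
      apply gcast
      have he : j % (n+1) + n = (j-1) + 1 * (n + 1) := by rw [hjm]; omega
      rw [he, Nat.add_mul_mod_self_right]
    rw [h1, h2]
  -- reindex the shifted sum over range n
  have hre : ∑ j ∈ Finset.Icc 1 n, s (j - 1) = ∑ i ∈ Finset.range n, s i := by
    rw [← Finset.Ico_add_one_right_eq_Icc, Finset.sum_Ico_eq_sum_range]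
    simp
  -- cocycle identity pointwise
  have hpt : ∀ i ∈ Finset.range n,
      s i = (ω₀ gN (P (i+1)) - ω₀ gN (P i)) + t i := by
    intro i hi
    simp only [Finset.mem_range] at hi
    have him : i % (n+1) = i := Nat.mod_eq_of_lt (by omega)
    have hc := hcoc gN (P i) (g ⟨i, by omega⟩)
    have hPi : P i * g ⟨i, by omega⟩ = P (i+1) := (hPsucc i (by omega)).symm
    rw [hPi] at hc
    have hgi : g ⟨i % (n+1), Nat.mod_lt i (Nat.succ_pos n)⟩ = g ⟨i, by omega⟩ :=
      gcast _ _ _ _ him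
    show ω₀ (gN * P i) (g ⟨i % (n + 1), Nat.mod_lt i (Nat.succ_pos n)⟩)
      = (ω₀ gN (P (i+1)) - ω₀ gN (P i))
        + ω₀ (P i) (g ⟨i % (n + 1), Nat.mod_lt i (Nat.succ_pos n)⟩)
    rw [hgi]
    linarith
  have hsum : ∑ i ∈ Finset.range n, s i
      = (ω₀ gN (P n) - ω₀ gN (P 0)) + ∑ i ∈ Finset.range n, t i := by
    rw [Finset.sum_congr rfl hpt, Finset.sum_add_distrib,
      Finset.sum_range_sub (fun i => ω₀ gN (P i))]
  -- boundary terms vanish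
  have h1 : ω₀ gN (P n) = 0 := by rw [hPninv]; exact hnorm₃ gN
  have h2 : ω₀ gN (P 0) = 0 := by rw [hP0]; exact hnorm₁ gN
  have ht0 : t 0 = 0 := by
    show ω₀ (P 0) (g ⟨0 % (n + 1), Nat.mod_lt 0 (Nat.succ_pos n)⟩) = 0
    rw [hP0]; exact hnorm₂ _
  have htn : t n = 0 := by
    show ω₀ (P n) (g ⟨n % (n + 1), Nat.mod_lt n (Nat.succ_pos n)⟩) = 0
    have e : g ⟨n % (n+1), Nat.mod_lt n (Nat.succ_pos n)⟩ = gN :=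
      gcast _ _ _ _ (Nat.mod_eq_of_lt (by omega))
    rw [e, hPninv]
    exact omega_inv_left ω₀ hcoc hnorm₁ hnorm₂ hnorm₃ gN
  -- assemble
  obtain ⟨m, rfl⟩ : ∃ m, n = m + 1 := ⟨n - 1, by omega⟩
  have hL : ∑ j ∈ Finset.Icc 1 (m+1), t j = ∑ i ∈ Finset.range m, t (i+1) + t (m+1) := by
    rw [← Finset.Ico_add_one_right_eq_Icc, Finset.sum_Ico_eq_sum_range]
    simp [Finset.sum_range_succ, add_comm]
  have hT : ∑ i ∈ Finset.range (m+1), t i = t 0 + ∑ i ∈ Finset.range m, t (i+1) := by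
    rw [Finset.sum_range_succ']
    ring
  rw [hLHS, hRHS, hre, hsum, h1, h2, hT, ht0, hL, htn]
  ring
end

section
/- Let A = ⊕_{g∈Γ} A_g be a Γ-graded unital ℂ-algebra, ω a normalized U(1)-valued 2-cocycle on Γ, and τ : A → ℂ a linear functional such that τ vanishes on A_g for every g ≠ e and τ(xy) = τ(yx) for all x, y ∈ A. Then τ is also a trace for the twisted product: τ(x *_ω y) = τ(y *_ω x) for all x, y ∈ A. -/
/-!
Both sides are bilinear in `x` and `y`, so it suffices to take `x ∈ A_g`, `y ∈ A_h`. Then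
`τ(x *_ω y) = ω(g,h) τ(xy)` and `τ(y *_ω x) = ω(h,g) τ(xy)`, since `τ` is a trace. If `gh ≠ e`
then `τ(xy) = 0` because `xy ∈ A_{gh}`; if `h = g⁻¹` the cocycle identity at `(g, g⁻¹, g)`
gives `ω(g,g⁻¹) = ω(g⁻¹,g)`.
-/

lemma cocycle_apply_inv_comm {G M : Type*} [Group G] [Monoid M] {ω : G → G → M}
    (hcoc : ∀ g h k : G, ω g h * ω (g * h) k = ω g (h * k) * ω h k)
    (hnorm₁ : ∀ g : G, ω g 1 = 1) (hnorm₂ : ∀ g : G, ω 1 g = 1) (g : G) :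
    ω g g⁻¹ = ω g⁻¹ g := by
  simpa [hnorm₁, hnorm₂] using hcoc g g⁻¹ g

lemma LinearMap.ext_of_iSup_eq_top₂ {R M N P ι : Type*} [CommSemiring R]
    [AddCommMonoid M] [AddCommMonoid N] [AddCommMonoid P] [Module R M] [Module R N] [Module R P]
    {p : ι → Submodule R M} {q : ι → Submodule R N}
    (hp : ⨆ i, p i = ⊤) (hq : ⨆ i, q i = ⊤) {f g : M →ₗ[R] N →ₗ[R] P}
    (h : ∀ i j, ∀ x ∈ p i, ∀ y ∈ q j, f x y = g x y) : f = g := by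
  rw [Submodule.iSup_eq_span] at hp hq
  refine LinearMap.ext_on hp fun x hx => LinearMap.ext_on hq fun y hy => ?_
  obtain ⟨i, hx⟩ := Set.mem_iUnion.mp hx
  obtain ⟨j, hy⟩ := Set.mem_iUnion.mp hy
  exact h i j x hx y hy

theorem stmt_6_general (Γ : Type) [Group Γ] [DecidableEq Γ]
    (A : Type) [Ring A] [Algebra ℂ A]
    (𝒜 : Γ → Submodule ℂ A)
    (hinternal : DirectSum.IsInternal 𝒜)
    (hmul : ∀ (g h : Γ) (x y : A), x ∈ 𝒜 g → y ∈ 𝒜 h → x * y ∈ 𝒜 (g * h))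
    (ω : Γ → Γ → ℂ)
    (hcoc : ∀ g h k : Γ, ω g h * ω (g * h) k = ω g (h * k) * ω h k)
    (hnorm₁ : ∀ g : Γ, ω g 1 = 1) (hnorm₂ : ∀ g : Γ, ω 1 g = 1)
    (μ : A →ₗ[ℂ] A →ₗ[ℂ] A)
    (hμ : ∀ (g h : Γ) (x y : A), x ∈ 𝒜 g → y ∈ 𝒜 h → μ x y = ω g h • (x * y))
    (τ : A →ₗ[ℂ] ℂ)
    (hτgrade : ∀ (g : Γ), g ≠ 1 → ∀ x ∈ 𝒜 g, τ x = 0)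
    (hτtrace : ∀ x y : A, τ (x * y) = τ (y * x)) :
    ∀ x y : A, τ (μ x y) = τ (μ y x) := by
  have htop := hinternal.submodule_iSup_eq_top
  have hhom : μ.compr₂ τ = (μ.compr₂ τ).flip := by
    refine LinearMap.ext_of_iSup_eq_top₂ htop htop fun g h x hx y hy => ?_
    simp only [LinearMap.compr₂_apply, LinearMap.flip_apply]
    rw [hμ g h x y hx hy, hμ h g y x hy hx, map_smul, map_smul, hτtrace y x]
    by_cases hgh : g * h = 1
    · rw [eq_inv_of_mul_eq_one_right hgh, cocycle_apply_inv_comm hcoc hnorm₁ hnorm₂]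
    · rw [hτgrade _ hgh _ (hmul g h x y hx hy), smul_zero, smul_zero]
  exact fun x y => LinearMap.congr_fun₂ hhom x y

/-- let `A = ⊕_{g∈Γ} A_g` be a Γ-graded unital ℂ-algebra, `ω` a normalized
U(1)-valued 2-cocycle on `Γ`, and `τ : A → ℂ` a linear functional vanishing on `A_g` for
`g ≠ e` and tracial for the original product.  Then `τ` is tracial for the twisted
product: `τ(x *_ω y) = τ(y *_ω x)` for all `x, y ∈ A`, where `μ` is the bilinear
extension of `x *_ω y = ω(g,h)·xy`. -/
theorem stmt_6 (Γ : Type) [Group Γ] [DecidableEq Γ]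
    (A : Type) [Ring A] [Algebra ℂ A]
    (𝒜 : Γ → Submodule ℂ A)
    (hinternal : DirectSum.IsInternal 𝒜)
    (hone : (1 : A) ∈ 𝒜 (1 : Γ))
    (hmul : ∀ (g h : Γ) (x y : A), x ∈ 𝒜 g → y ∈ 𝒜 h → x * y ∈ 𝒜 (g * h))
    (ω : Γ → Γ → ℂ)
    (habs : ∀ g h : Γ, ‖ω g h‖ = 1)
    (hcoc : ∀ g h k : Γ, ω g h * ω (g * h) k = ω g (h * k) * ω h k)
    (hnorm₁ : ∀ g : Γ, ω g 1 = 1) (hnorm₂ : ∀ g : Γ, ω 1 g = 1)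
    (hnorm₃ : ∀ g : Γ, ω g g⁻¹ = 1)
    (μ : A →ₗ[ℂ] A →ₗ[ℂ] A)
    (hμ : ∀ (g h : Γ) (x y : A), x ∈ 𝒜 g → y ∈ 𝒜 h → μ x y = ω g h • (x * y))
    (τ : A →ₗ[ℂ] ℂ)
    (hτgrade : ∀ (g : Γ), g ≠ 1 → ∀ x ∈ 𝒜 g, τ x = 0)
    (hτtrace : ∀ x y : A, τ (x * y) = τ (y * x)) :
    ∀ x y : A, τ (μ x y) = τ (μ y x) :=
  stmt_6_general Γ A 𝒜 hinternal hmul ω hcoc hnorm₁ hnorm₂ μ hμ τ hτgrade hτtrace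
end

section
/- Let A = ⊕_{g∈Γ} A_g be a Γ-graded unital ℂ-algebra, ω₀ an ℝ-valued 2-cocycle on Γ, and μ(x,y) = ω₀(g,h)·xy (x ∈ A_g, y ∈ A_h, extended bilinearly). Let φ : A^{⊗(n+1)} → ℂ be a multilinear functional which is a Hochschild n-cocycle, i.e. bφ = 0. Define the multilinear functional ψ : A^{⊗(n+3)} → ℂ by ψ(f⁰, f¹, …, f^{n+2}) = −φ( μ(f^{n+1}, f^{n+2})·f⁰, f¹, …, fⁿ ). Then ψ is a Hochschild (n+2)-cocycle: bψ = 0. -/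
/-- The Hochschild coboundary of an `m`-cochain (a functional on `A^{⊗(m+1)}`):
`(bχ)(f⁰,…,f^{m+1}) = Σ_{j=0}^m (−1)^j χ(f⁰,…,f^j f^{j+1},…,f^{m+1})
+ (−1)^{m+1} χ(f^{m+1} f⁰, f¹,…,f^m)`. -/
noncomputable def hochCobound {A : Type} [Ring A] (m : ℕ) (χ : (Fin (m + 1) → A) → ℂ) :
    (Fin (m + 2) → A) → ℂ := fun f =>
  (∑ j ∈ Finset.range (m + 1), (-1 : ℂ) ^ j *
      χ (fun i : Fin (m + 1) =>
        if i.val < j then f i.castSucc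
        else if i.val = j then
          f ⟨j % (m + 2), Nat.mod_lt j (by omega)⟩ *
            f ⟨(j + 1) % (m + 2), Nat.mod_lt (j + 1) (by omega)⟩
        else f i.succ))
    + (-1 : ℂ) ^ (m + 1) *
        χ (fun i : Fin (m + 1) =>
          if i.val = 0 then f (Fin.last (m + 1)) * f 0 else f i.castSucc)

/-!
On homogeneous elements the twisted product satisfies
`x μ(y,z) − μ(xy,z) + μ(x,yz) − μ(x,y) z = (ω₀(h,k) − ω₀(gh,k) + ω₀(g,hk) − ω₀(g,h)) xyz = 0`,
so by additivity `μ` is a Hochschild 2-cocycle of `A` with values in `A`.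
Evaluate `bψ` at `(f⁰,…,f^{n+3})` and put `g = (μ(f^{n+2},f^{n+3}) f⁰, f¹,…,f^{n+1})`. The faces
`j ≤ n` of `bψ` are minus the faces `j ≤ n` of `bφ` at `g`, so `bψ = −bφ(g) + (−1)^{n+1}·E`, where
`E` is `φ` applied in its first slot to the 2-cocycle identity for `(f^{n+1},f^{n+2},f^{n+3})`
multiplied on the right by `f⁰`; hence `E = 0` by additivity of `φ` in that slot.
-/

open Finset

def IsHochschildTwoCocycle {A : Type*} [Mul A] [Add A] (c : A → A → A) : Prop :=
  ∀ x y z : A, x * c y z + c x (y * z) = c (x * y) z + c x y * z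

theorem Submodule.forall_of_iSup_eq_top {ι R M : Type*} [Semiring R] [AddCommMonoid M]
    [Module R M] {p : ι → Submodule R M} (hspan : ⨆ g, p g = ⊤) {motive : M → Prop}
    (mem : ∀ g, ∀ x ∈ p g, motive x) (zero : motive 0)
    (add : ∀ x y, motive x → motive y → motive (x + y)) (x : M) : motive x :=
  Submodule.iSup_induction p (x := x) (by simp [hspan]) mem zero add

section Twist

variable {ι R A : Type*} [Mul ι] [CommSemiring R] [Semiring A] [Algebra R A]
  {𝒜 : ι → Submodule R A} {ω : ι → ι → R} {μ : A →ₗ[R] A →ₗ[R] A}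

theorem hochschild_identity_of_twist_of_mem
    (hmul : ∀ (g h : ι) (x y : A), x ∈ 𝒜 g → y ∈ 𝒜 h → x * y ∈ 𝒜 (g * h))
    (hω : ∀ g h k : ι, ω g h + ω (g * h) k = ω g (h * k) + ω h k)
    (hμ : ∀ (g h : ι) (x y : A), x ∈ 𝒜 g → y ∈ 𝒜 h → μ x y = ω g h • (x * y))
    {g h k : ι} {x y z : A} (hx : x ∈ 𝒜 g) (hy : y ∈ 𝒜 h) (hz : z ∈ 𝒜 k) :
    x * μ y z + μ x (y * z) = μ (x * y) z + μ x y * z := by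
  rw [hμ h k y z hy hz, hμ g (h * k) x (y * z) hx (hmul h k y z hy hz),
    hμ (g * h) k (x * y) z (hmul g h x y hx hy) hz, hμ g h x y hx hy, mul_smul_comm,
    smul_mul_assoc, mul_assoc, ← add_smul, ← add_smul, add_comm (ω h k), ← hω, add_comm (ω g h)]

theorem isHochschildTwoCocycle_of_twist (hspan : ⨆ g, 𝒜 g = ⊤)
    (hmul : ∀ (g h : ι) (x y : A), x ∈ 𝒜 g → y ∈ 𝒜 h → x * y ∈ 𝒜 (g * h))
    (hω : ∀ g h k : ι, ω g h + ω (g * h) k = ω g (h * k) + ω h k)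
    (hμ : ∀ (g h : ι) (x y : A), x ∈ 𝒜 g → y ∈ 𝒜 h → μ x y = ω g h • (x * y)) :
    IsHochschildTwoCocycle (fun x y => μ x y) := by
  intro x y z
  induction x using Submodule.forall_of_iSup_eq_top hspan generalizing y z with
  | zero => simp
  | add x₁ x₂ h₁ h₂ =>
    simp only [add_mul, map_add, LinearMap.add_apply]
    rw [add_add_add_comm, h₁, h₂, add_add_add_comm]
  | mem g x hx =>
  induction y using Submodule.forall_of_iSup_eq_top hspan generalizing z with
  | zero => simp
  | add y₁ y₂ h₁ h₂ =>
    simp only [add_mul, mul_add, map_add, LinearMap.add_apply]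
    rw [add_add_add_comm, h₁, h₂, add_add_add_comm]
  | mem h y hy =>
  induction z using Submodule.forall_of_iSup_eq_top hspan with
  | zero => simp
  | add z₁ z₂ h₁ h₂ =>
    simp only [mul_add, map_add]
    rw [add_add_add_comm, h₁, h₂, add_add_add_comm]
  | mem k z hz => exact hochschild_identity_of_twist_of_mem hmul hω hμ hx hy hz

end Twist

section Hochschild

variable {A : Type} [Ring A]

def hochFace (m j : ℕ) (f : Fin (m + 2) → A) : Fin (m + 1) → A := fun i =>
  if i.val < j then f i.castSucc else if i.val = j then f i.castSucc * f i.succ else f i.succ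

def hochCyclicFace (m : ℕ) (f : Fin (m + 2) → A) : Fin (m + 1) → A := fun i =>
  if i.val = 0 then f (Fin.last (m + 1)) * f 0 else f i.castSucc

theorem hochCobound_apply (m : ℕ) (χ : (Fin (m + 1) → A) → ℂ) (f : Fin (m + 2) → A) :
    hochCobound m χ f = ∑ j ∈ range (m + 1), (-1 : ℂ) ^ j * χ (hochFace m j f)
      + (-1 : ℂ) ^ (m + 1) * χ (hochCyclicFace m f) := by
  refine congrArg (· + _) (sum_congr rfl fun j _ => ?_)
  congr 2
  funext i
  simp only [hochFace]
  split_ifs with h₁ h₂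
  · rfl
  · subst h₂
    congr <;> simp [Nat.mod_eq_of_lt, i.is_le]
  · rfl

variable {n : ℕ}

def cupInsert (c : A → A → A) (f : Fin (n + 3) → A) : Fin (n + 1) → A := fun i =>
  if i.val = 0 then c (f (Fin.last (n + 1)).castSucc) (f (Fin.last (n + 2))) * f 0
  else f i.castSucc.castSucc

def hochCup (c : A → A → A) (φ : (Fin (n + 1) → A) → ℂ) : (Fin (n + 3) → A) → ℂ :=
  fun f => -φ (cupInsert c f)

theorem cupInsert_hochFace_of_lt (c : A → A → A) (f : Fin (n + 4) → A) {j : ℕ} (hj : j < n + 1) :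
    cupInsert c (hochFace (n + 2) j f) = hochFace n j (cupInsert c f) := by
  funext i
  simp only [cupInsert, hochFace, Fin.val_castSucc, Fin.val_succ, Fin.val_last]
  split_ifs <;> first | omega | contradiction | rfl | simp_all [mul_assoc, Fin.succ_castSucc]

theorem cupInsert_hochFace_succ (c : A → A → A) (f : Fin (n + 4) → A) :
    cupInsert c (hochFace (n + 2) (n + 1) f) =
      Function.update (fun i : Fin (n + 1) => f ⟨i, by omega⟩) 0
        (c (f ⟨n + 1, by omega⟩ * f ⟨n + 2, by omega⟩) (f ⟨n + 3, by omega⟩) * f 0) := by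
  funext i
  rcases eq_or_ne i 0 with rfl | hi
  · simp [cupInsert, hochFace]
    rfl
  · simp [cupInsert, hochFace, hi, Fin.val_ne_zero_iff.mpr hi, i.is_le]
    rfl

theorem cupInsert_hochFace_succ_succ (c : A → A → A) (f : Fin (n + 4) → A) :
    cupInsert c (hochFace (n + 2) (n + 2) f) =
      Function.update (fun i : Fin (n + 1) => f ⟨i, by omega⟩) 0
        (c (f ⟨n + 1, by omega⟩) (f ⟨n + 2, by omega⟩ * f ⟨n + 3, by omega⟩) * f 0) := by
  funext i
  rcases eq_or_ne i 0 with rfl | hi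
  · simp [cupInsert, hochFace]
    rfl
  · simp [cupInsert, hochFace, hi, Fin.val_ne_zero_iff.mpr hi, show (i : ℕ) < n + 2 by omega]
    rfl

theorem cupInsert_hochCyclicFace (c : A → A → A) (f : Fin (n + 4) → A) :
    cupInsert c (hochCyclicFace (n + 2) f) =
      Function.update (fun i : Fin (n + 1) => f ⟨i, by omega⟩) 0
        (c (f ⟨n + 1, by omega⟩) (f ⟨n + 2, by omega⟩) * (f ⟨n + 3, by omega⟩ * f 0)) := by
  funext i
  rcases eq_or_ne i 0 with rfl | hi
  · simp [cupInsert, hochCyclicFace]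
    rfl
  · simp [cupInsert, hochCyclicFace, hi, Fin.val_ne_zero_iff.mpr hi]
    rfl

theorem hochCyclicFace_cupInsert (c : A → A → A) (f : Fin (n + 4) → A) :
    hochCyclicFace n (cupInsert c f) =
      Function.update (fun i : Fin (n + 1) => f ⟨i, by omega⟩) 0
        (f ⟨n + 1, by omega⟩ * (c (f ⟨n + 2, by omega⟩) (f ⟨n + 3, by omega⟩) * f 0)) := by
  funext i
  rcases eq_or_ne i 0 with rfl | hi
  · simp [hochCyclicFace, cupInsert]
    rfl
  · simp [hochCyclicFace, cupInsert, hi, Fin.val_ne_zero_iff.mpr hi]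
    rfl

theorem hochCobound_hochCup_eq_zero [Module ℂ A] {c : A → A → A} (hc : IsHochschildTwoCocycle c)
    {φ : MultilinearMap ℂ (fun _ : Fin (n + 1) => A) ℂ} (hφ : hochCobound n φ = 0) :
    hochCobound (n + 2) (hochCup c φ) = 0 := by
  funext f
  have hb := congrFun hφ (cupInsert c f)
  simp only [hochCobound_apply, Pi.zero_apply, hochCyclicFace_cupInsert] at hb ⊢
  simp only [hochCup, sum_range_succ _ (n + 1 + 1), sum_range_succ _ (n + 1), mul_neg,
    sum_neg_distrib]
  rw [sum_congr rfl fun j hj => by rw [cupInsert_hochFace_of_lt c f (mem_range.1 hj)],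
    cupInsert_hochFace_succ, cupInsert_hochFace_succ_succ, cupInsert_hochCyclicFace]
  set U := Function.update (fun i : Fin (n + 1) => f ⟨i, by omega⟩) 0
  set a := f 0
  set x := f ⟨n + 1, by omega⟩
  set y := f ⟨n + 2, by omega⟩
  set z := f ⟨n + 3, by omega⟩
  have hE : φ (U (x * (c y z * a))) + φ (U (c x (y * z) * a)) =
      φ (U (c (x * y) z * a)) + φ (U (c x y * (z * a))) := by
    rw [← φ.map_update_add, ← φ.map_update_add, ← mul_assoc, ← add_mul, hc, add_mul, mul_assoc]
  linear_combination -hb + (-1 : ℂ) ^ (n + 1) * hE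

end Hochschild

/-- let `A = ⊕_{g∈Γ} A_g` be a Γ-graded unital ℂ-algebra, `ω₀` an ℝ-valued
2-cocycle on `Γ`, and `μ` the bilinear map with `μ(x,y) = ω₀(g,h)·xy` on homogeneous
elements.  If `φ : A^{⊗(n+1)} → ℂ` is a multilinear Hochschild `n`-cocycle (`bφ = 0`),
then `ψ(f⁰,…,f^{n+2}) = −φ(μ(f^{n+1},f^{n+2})·f⁰, f¹,…,fⁿ)` is a Hochschild
`(n+2)`-cocycle: `bψ = 0`. -/
theorem stmt_12 (Γ : Type) [Group Γ] [DecidableEq Γ]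
    (A : Type) [Ring A] [Algebra ℂ A]
    (𝒜 : Γ → Submodule ℂ A)
    (hinternal : DirectSum.IsInternal 𝒜)
    (hmul : ∀ (g h : Γ) (x y : A), x ∈ 𝒜 g → y ∈ 𝒜 h → x * y ∈ 𝒜 (g * h))
    (ω₀ : Γ → Γ → ℝ)
    (hcoc : ∀ g h k : Γ, ω₀ g h + ω₀ (g * h) k = ω₀ g (h * k) + ω₀ h k)
    (μ : A →ₗ[ℂ] A →ₗ[ℂ] A)
    (hμ : ∀ (g h : Γ) (x y : A), x ∈ 𝒜 g → y ∈ 𝒜 h →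
      μ x y = ((ω₀ g h : ℂ)) • (x * y))
    (n : ℕ)
    (φ : MultilinearMap ℂ (fun _ : Fin (n + 1) => A) ℂ)
    (hφ : hochCobound n ⇑φ = 0) :
    hochCobound (n + 2)
      (fun f : Fin (n + 3) → A =>
        -(φ (fun i : Fin (n + 1) =>
          if i.val = 0 then
            μ (f ⟨n + 1, by omega⟩) (f ⟨n + 2, by omega⟩) * f ⟨0, by omega⟩
          else f ⟨i.val, by omega⟩))) = 0 := by
  have hμ_cocycle : IsHochschildTwoCocycle (fun x y => μ x y) :=
    isHochschildTwoCocycle_of_twist (ω := fun g h => (ω₀ g h : ℂ))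
      hinternal.submodule_iSup_eq_top hmul (fun g h k => mod_cast hcoc g h k) hμ
  exact hochCobound_hochCup_eq_zero hμ_cocycle hφ
end

section
/- Let A = ⊕_{g∈Γ} A_g be a Γ-graded unital ℂ-algebra and ω₀ a normalized ℝ-valued 2-cocycle on Γ. Let φ : A^{⊗(n+1)} → ℂ be a multilinear functional that is cyclic, φ(f⁰, …, fⁿ) = (−1)ⁿ φ(fⁿ, f⁰, …, f^{n−1}), and α-invariant, meaning φ(f⁰, …, fⁿ) = 0 whenever f^j ∈ A_{g_j} are homogeneous with g₀g₁⋯gₙ ≠ e. Define the multilinear functional ω₀^{(n)}φ on A^{⊗(n+1)} by ω₀^{(n)}φ(f⁰, …, fⁿ) = ω₀^{(n)}(g₀, …, gₙ)·φ(f⁰, …, fⁿ) for homogeneous f^j ∈ A_{g_j}, extended multilinearly, where ω₀^{(n)}(g₀,…,gₙ) = Σ_{j=1}^{n} ω₀(g₀⋯g_{j−1}, g_j). Then ω₀^{(n)}φ is again cyclic: ω₀^{(n)}φ(f⁰, …, fⁿ) = (−1)ⁿ ω₀^{(n)}φ(fⁿ, f⁰, …, f^{n−1}). -/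
theorem MultilinearMap.ext_of_iSup_eq_top {ι Γ R M N : Type*} [Fintype ι] [DecidableEq ι]
    [CommSemiring R] [AddCommMonoid M] [Module R M] [AddCommMonoid N] [Module R N]
    {𝒜 : Γ → Submodule R M} (h𝒜 : ⨆ γ, 𝒜 γ = ⊤) {F G : MultilinearMap R (fun _ : ι => M) N}
    (hFG : ∀ (g : ι → Γ) (f : ι → M), (∀ i, f i ∈ 𝒜 (g i)) → F f = G f) : F = G := by
  ext f
  choose c hc hsum using fun i =>
    (Submodule.mem_iSup_iff_exists_finsupp 𝒜 (f i)).mp (h𝒜 ▸ Submodule.mem_top)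
  have hf : f = fun i => ∑ γ ∈ (c i).support, c i γ := funext fun i => (hsum i).symm
  rw [hf, F.map_sum_finset, G.map_sum_finset]
  exact Finset.sum_congr rfl fun r _ => hFG r _ fun i => hc i (r i)

theorem finRotate_symm_eq_mk (n : ℕ) (i : Fin (n + 1)) :
    (finRotate (n + 1)).symm i = ⟨(i.val + n) % (n + 1), Nat.mod_lt _ (Nat.succ_pos n)⟩ := by
  rw [Equiv.symm_apply_eq, finRotate_apply]
  ext
  rw [Fin.val_add, Fin.val_one', Nat.add_mod_mod, Nat.mod_add_mod, add_assoc, Nat.add_mod_right,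
    Nat.mod_eq_of_lt i.isLt]

theorem Fin.comp_finRotate_symm_eq_cons_init {α : Type*} {n : ℕ} (g : Fin (n + 1) → α) :
    g ∘ (finRotate (n + 1)).symm = Fin.cons (g (Fin.last n)) (Fin.init g) := by
  conv_lhs => rw [← Fin.snoc_init_self g]
  ext i
  simp [Fin.snoc_eq_cons_rotate]

theorem prod_ofFn_cons_eq_one_iff {G : Type*} [Group G] {n : ℕ} (h : Fin n → G) (a : G) :
    (List.ofFn (Fin.cons a h : Fin (n + 1) → G)).prod = 1 ↔
      (List.ofFn (Fin.snoc h a : Fin (n + 1) → G)).prod = 1 := by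
  rw [List.ofFn_cons, List.ofFn_succ', List.prod_cons, List.prod_concat, mul_eq_one_comm]
  simp

theorem prod_ofFn_comp_finRotate_symm_eq_one_iff {G : Type*} [Group G] {n : ℕ}
    (g : Fin (n + 1) → G) :
    (List.ofFn (g ∘ (finRotate (n + 1)).symm)).prod = 1 ↔ (List.ofFn g).prod = 1 := by
  conv_rhs => rw [← Fin.snoc_init_self g]
  rw [Fin.comp_finRotate_symm_eq_cons_init, prod_ofFn_cons_eq_one_iff]

section Cocycle

variable {Γ : Type} [Group Γ] {ω₀ : Γ → Γ → ℝ}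

structure IsNormalizedCocycle (ω₀ : Γ → Γ → ℝ) : Prop where
  cocycle : ∀ g h k, ω₀ g h + ω₀ (g * h) k = ω₀ g (h * k) + ω₀ h k
  map_one_right : ∀ g, ω₀ g 1 = 0
  map_one_left : ∀ g, ω₀ 1 g = 0
  map_inv_right : ∀ g, ω₀ g g⁻¹ = 0

theorem omegaN_eq_sum_partialProd (h_one_left : ∀ g, ω₀ 1 g = 0) (n : ℕ) (g : Fin (n + 1) → Γ) :
    omegaN ω₀ n g = ∑ j : Fin (n + 1), ω₀ (Fin.partialProd g j.castSucc) (g j) := by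
  rw [Fin.sum_univ_succ, Fin.castSucc_zero, Fin.partialProd_zero, h_one_left, zero_add, omegaN,
    ← Finset.Ico_add_one_right_eq_Icc, Finset.sum_Ico_eq_sum_range, Nat.add_sub_cancel,
    ← Fin.sum_univ_eq_sum_range]
  refine Finset.sum_congr rfl fun j _ => ?_
  have hj : ((j : ℕ) + 1) % (n + 1) = (j : ℕ) + 1 := by
    rw [Nat.mod_eq_of_lt]; omega
  simp only [hj, Fin.partialProd, Fin.val_castSucc, Fin.val_succ, add_comm 1 (j : ℕ)]
  rfl

theorem omegaN_cons_eq_snoc (hω : IsNormalizedCocycle ω₀) {n : ℕ} (h : Fin n → Γ) (a : Γ)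
    (hloop : (List.ofFn (Fin.snoc h a : Fin (n + 1) → Γ)).prod = 1) :
    omegaN ω₀ n (Fin.cons a h) = omegaN ω₀ n (Fin.snoc h a) := by
  rw [omegaN_eq_sum_partialProd hω.map_one_left, omegaN_eq_sum_partialProd hω.map_one_left,
    Fin.sum_univ_succ, Fin.sum_univ_castSucc]
  simp only [Fin.castSucc_zero, Fin.partialProd_zero, Fin.cons_zero, Fin.cons_succ,
    Fin.snoc_castSucc, Fin.snoc_last, ← Fin.succ_castSucc, Fin.partialProd_succ', Fin.tail_cons,
    ← Fin.partialProd_init, Fin.init_snoc, hω.map_one_left, zero_add]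
  set P := Fin.partialProd h
  have hP0 : P 0 = 1 := Fin.partialProd_zero h
  have hPlast : P (Fin.last n) = a⁻¹ := by
    rw [List.ofFn_succ', List.prod_concat, Fin.snoc_last] at hloop
    simp only [Fin.snoc_castSucc] at hloop
    refine eq_inv_of_mul_eq_one_left ?_
    simpa [P, Fin.partialProd, List.take_of_length_le] using hloop
  have hstep (j : Fin n) : ω₀ (a * P j.castSucc) (h j)
      = ω₀ (P j.castSucc) (h j) + (ω₀ a (P j.succ) - ω₀ a (P j.castSucc)) := by
    have hPsucc : P j.succ = P j.castSucc * h j := Fin.partialProd_succ h j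
    rw [hPsucc]
    linarith [hω.cocycle a (P j.castSucc) (h j)]
  have htelescope : ∑ j : Fin n, (ω₀ a (P j.succ) - ω₀ a (P j.castSucc))
      = ω₀ a (P (Fin.last n)) - ω₀ a (P 0) := by
    rw [Finset.sum_sub_distrib]
    linarith [Fin.sum_univ_succ fun j => ω₀ a (P j), Fin.sum_univ_castSucc fun j => ω₀ a (P j)]
  have hinv : ω₀ a⁻¹ a = 0 := by simpa using hω.map_inv_right a⁻¹
  rw [Finset.sum_congr rfl fun j _ => hstep j, Finset.sum_add_distrib, htelescope, hPlast, hP0,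
    hω.map_inv_right, hω.map_one_right, hinv]
  ring

theorem omegaN_comp_finRotate_symm (hω : IsNormalizedCocycle ω₀) {n : ℕ} (g : Fin (n + 1) → Γ)
    (hloop : (List.ofFn g).prod = 1) :
    omegaN ω₀ n (g ∘ (finRotate (n + 1)).symm) = omegaN ω₀ n g := by
  rw [Fin.comp_finRotate_symm_eq_cons_init,
    omegaN_cons_eq_snoc hω _ _ (by rwa [Fin.snoc_init_self]), Fin.snoc_init_self]

end Cocycle

theorem stmt_15_general (Γ : Type) [Group Γ] [DecidableEq Γ]
    (A : Type) [Ring A] [Algebra ℂ A]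
    (𝒜 : Γ → Submodule ℂ A)
    (hinternal : DirectSum.IsInternal 𝒜)
    (ω₀ : Γ → Γ → ℝ)
    (hcoc : ∀ g h k : Γ, ω₀ g h + ω₀ (g * h) k = ω₀ g (h * k) + ω₀ h k)
    (hnorm₁ : ∀ g : Γ, ω₀ g 1 = 0) (hnorm₂ : ∀ g : Γ, ω₀ 1 g = 0)
    (hnorm₃ : ∀ g : Γ, ω₀ g g⁻¹ = 0)
    (n : ℕ)
    (φ ψ : MultilinearMap ℂ (fun _ : Fin (n + 1) => A) ℂ)
    (hcyclic : ∀ f : Fin (n + 1) → A,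
      φ f = (-1 : ℂ) ^ n *
        φ (fun i => f ⟨(i.val + n) % (n + 1), Nat.mod_lt _ (Nat.succ_pos n)⟩))
    (hinvariant : ∀ (g : Fin (n + 1) → Γ) (f : Fin (n + 1) → A),
      (∀ i, f i ∈ 𝒜 (g i)) → (List.ofFn g).prod ≠ 1 → φ f = 0)
    (hψ : ∀ (g : Fin (n + 1) → Γ) (f : Fin (n + 1) → A),
      (∀ i, f i ∈ 𝒜 (g i)) → ψ f = (omegaN ω₀ n g : ℂ) * φ f) :
    ∀ f : Fin (n + 1) → A,
      ψ f = (-1 : ℂ) ^ n *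
        ψ (fun i => f ⟨(i.val + n) % (n + 1), Nat.mod_lt _ (Nat.succ_pos n)⟩) := by
  have hrot (f : Fin (n + 1) → A) :
      (fun i => f ⟨(i.val + n) % (n + 1), Nat.mod_lt _ (Nat.succ_pos n)⟩)
        = f ∘ (finRotate (n + 1)).symm :=
    funext fun i => congrArg f (finRotate_symm_eq_mk n i).symm
  suffices hψ_cyclic : ψ = (-1 : ℂ) ^ n • ψ.domDomCongr (finRotate (n + 1)).symm by
    intro f
    rw [hrot]
    exact congr($hψ_cyclic f)
  refine MultilinearMap.ext_of_iSup_eq_top hinternal.submodule_iSup_eq_top fun g f hf => ?_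
  have hf_rot (i : Fin (n + 1)) :
      (f ∘ (finRotate (n + 1)).symm) i ∈ 𝒜 ((g ∘ (finRotate (n + 1)).symm) i) := hf _
  change ψ f = (-1 : ℂ) ^ n * ψ (f ∘ (finRotate (n + 1)).symm)
  rw [hψ g f hf, hψ _ _ hf_rot]
  by_cases hloop : (List.ofFn g).prod = 1
  · rw [omegaN_comp_finRotate_symm ⟨hcoc, hnorm₁, hnorm₂, hnorm₃⟩ g hloop, hcyclic f, hrot]
    ring
  · have hloop_rot := (prod_ofFn_comp_finRotate_symm_eq_one_iff g).not.mpr hloop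
    rw [hinvariant g f hf hloop, hinvariant _ _ hf_rot hloop_rot]
    ring

/-- let `A = ⊕_{g∈Γ} A_g` be a Γ-graded unital ℂ-algebra, `ω₀` a normalized
ℝ-valued 2-cocycle, and `φ` a cyclic, α-invariant multilinear functional on `A^{⊗(n+1)}`.
Then the multilinear functional `ψ = ω₀^{(n)}φ`, determined on homogeneous tuples by
`ψ(f⁰,…,fⁿ) = ω₀^{(n)}(g₀,…,gₙ)·φ(f⁰,…,fⁿ)`, is again cyclic. -/
theorem stmt_15 (Γ : Type) [Group Γ] [DecidableEq Γ]
    (A : Type) [Ring A] [Algebra ℂ A]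
    (𝒜 : Γ → Submodule ℂ A)
    (hinternal : DirectSum.IsInternal 𝒜)
    (hone : (1 : A) ∈ 𝒜 (1 : Γ))
    (hmul : ∀ (g h : Γ) (x y : A), x ∈ 𝒜 g → y ∈ 𝒜 h → x * y ∈ 𝒜 (g * h))
    (ω₀ : Γ → Γ → ℝ)
    (hcoc : ∀ g h k : Γ, ω₀ g h + ω₀ (g * h) k = ω₀ g (h * k) + ω₀ h k)
    (hnorm₁ : ∀ g : Γ, ω₀ g 1 = 0) (hnorm₂ : ∀ g : Γ, ω₀ 1 g = 0)
    (hnorm₃ : ∀ g : Γ, ω₀ g g⁻¹ = 0)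
    (n : ℕ)
    (φ ψ : MultilinearMap ℂ (fun _ : Fin (n + 1) => A) ℂ)
    (hcyclic : ∀ f : Fin (n + 1) → A,
      φ f = (-1 : ℂ) ^ n *
        φ (fun i => f ⟨(i.val + n) % (n + 1), Nat.mod_lt _ (Nat.succ_pos n)⟩))
    (hinvariant : ∀ (g : Fin (n + 1) → Γ) (f : Fin (n + 1) → A),
      (∀ i, f i ∈ 𝒜 (g i)) → (List.ofFn g).prod ≠ 1 → φ f = 0)
    (hψ : ∀ (g : Fin (n + 1) → Γ) (f : Fin (n + 1) → A),
      (∀ i, f i ∈ 𝒜 (g i)) → ψ f = (omegaN ω₀ n g : ℂ) * φ f) :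
    ∀ f : Fin (n + 1) → A,
      ψ f = (-1 : ℂ) ^ n *
        ψ (fun i => f ⟨(i.val + n) % (n + 1), Nat.mod_lt _ (Nat.succ_pos n)⟩) :=
  stmt_15_general Γ A 𝒜 hinternal ω₀ hcoc hnorm₁ hnorm₂ hnorm₃ n φ ψ hcyclic hinvariant hψ
end
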